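/- arXiv:2603.07802 — 2 statements merged into one kernel-verified Lean document; each statement's English description precedes it below -/
import Mathlib

section
/- Let K be a differential ring with derivation D, let n be a natural number, and let a_0 = 1, a_1, ..., a_n ∈ K. Define I_k := Σ_{j=0}^{k} C(k,j) * a_{k−j} * Q_j(−a_1) for 0 ≤ k ≤ n. Then I_0 = 1, I_1 = 0, and for every y ∈ K one has the Miura (oper) expansion Σ_{i=0}^{n} C(n,i) * a_i * D^{n−i}(y) = Σ_{k=0}^{n} C(n,k) * I_k * ∇^{n−k}(y), where ∇(y) = D(y) + a_1*y and ∇^m is the m-th iterate of ∇. -/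
/-!
Write `∇ z = D z + c * z` and `Q j = qBell D c (-c) j`. For `u = -c` the recursion becomes
`Q (j + 1) = D (Q j) - Q j * c`, and in the Leibniz rule the twists by `c` of `Q` and of `∇`
cancel: `D (Q i * ∇^[j] y) = Q (i + 1) * ∇^[j] y + Q i * ∇^[j + 1] y`. So `D` acts on the
family `Q i * ∇^[j] y` like the shift `(i, j) ↦ (i + 1, j) + (i, j + 1)`, and Pascal's
rule gives `D^[m] y = ∑ C(m, j) Q j ∇^[m - j] y`. Substituting this into
`∑ C(n, i) a i D^[n - i] y` and regrouping by `k = i + j`, with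
`C(n, i) C(n - i, j) = C(n, k) C(k, j)`, produces the `I k`.
-/

/-- Covariant Bell polynomials relative to `c`:
`Q 0 = 1`, `Q (m+1) = Δ_c (Q m) + u * Q m` where `Δ_c b = D b + c*b - b*c`. -/
def qBell {K : Type*} [Ring K] (D : K → K) (c u : K) : ℕ → K
  | 0 => 1
  | m + 1 =>
      (D (qBell D c u m) + c * qBell D c u m - qBell D c u m * c)
        + u * qBell D c u m

open Finset

theorem AddMonoidHom.iterate_apply_eq_sum_choose_nsmul {M : Type*} [AddCommMonoid M]
    (D : M →+ M) (f : ℕ → ℕ → M) (hf : ∀ i j, D (f i j) = f (i + 1) j + f i (j + 1))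
    (m : ℕ) :
    D^[m] (f 0 0) = ∑ ij ∈ antidiagonal m, m.choose ij.1 • f ij.1 ij.2 := by
  induction m with
  | zero => simp
  | succ m ih =>
    rw [sum_antidiagonal_choose_succ_nsmul f m, Function.iterate_succ_apply', ih, add_comm]
    simp only [map_sum, map_nsmul, hf, smul_add, sum_add_distrib]
    refine congrArg (· + _) (sum_congr rfl fun ij hij ↦ ?_)
    rw [m.choose_symm_of_eq_add (mem_antidiagonal.1 hij).symm]

theorem Finset.sum_range_sum_range_sub_eq {M : Type*} [AddCommMonoid M] (n : ℕ)
    (g : ℕ → ℕ → M) :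
    ∑ i ∈ range (n + 1), ∑ j ∈ range (n - i + 1), g i j
      = ∑ k ∈ range (n + 1), ∑ j ∈ range (k + 1), g (k - j) j := by
  have hflip := sum_range_diag_flip (n + 1) g
  have hreflect (k : ℕ) :
      ∑ j ∈ range (k + 1), g (k - j) j = ∑ j ∈ range (k + 1), g j (k - j) := by
    rw [← sum_range_reflect]
    exact sum_congr rfl fun j hj ↦ by
      rw [mem_range] at hj; rw [show k - (k + 1 - 1 - j) = j by omega]; rfl
  simp only [hreflect, hflip]
  exact sum_congr rfl fun i hi ↦ by rw [mem_range] at hi; rw [show n + 1 - i = n - i + 1 by omega]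

theorem sum_choose_mul_sum_choose_mul {K : Type*} [Ring K] (a q x : ℕ → K) (n : ℕ) :
    ∑ i ∈ range (n + 1), (n.choose i : K) * a i *
        ∑ j ∈ range (n - i + 1), ((n - i).choose j : K) * q j * x (n - i - j)
      = ∑ k ∈ range (n + 1),
          (n.choose k : K) * (∑ j ∈ range (k + 1), (k.choose j : K) * a (k - j) * q j) *
            x (n - k) := by
  simp only [mul_sum, sum_mul]
  rw [sum_range_sum_range_sub_eq]
  refine sum_congr rfl fun k hk ↦ sum_congr rfl fun j hj ↦ ?_
  rw [mem_range] at hk hj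
  have hcoef : (n.choose (k - j) * (n - (k - j)).choose j : K) = n.choose k * k.choose j := by
    have h := Nat.choose_mul (n := n) (k.sub_le j)
    rw [Nat.choose_symm (by omega), Nat.sub_sub_self (by omega)] at h
    exact_mod_cast congrArg (Nat.cast : ℕ → K) h.symm
  simp only [← mul_assoc]
  rw [show n - (k - j) - j = n - k by omega, mul_assoc _ (a _), ← Nat.cast_comm, ← mul_assoc,
    hcoef]

section Leibniz

variable {K : Type*} [Ring K] (D : K → K)

theorem leibniz_map_one (hmul : ∀ a b : K, D (a * b) = D a * b + a * D b) : D 1 = 0 := by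
  simpa using hmul 1 1

theorem qBell_neg_succ (c : K) (j : ℕ) :
    qBell D c (-c) (j + 1) = D (qBell D c (-c) j) - qBell D c (-c) j * c := by
  rw [qBell]; noncomm_ring

theorem map_qBell_neg_mul_iterate (hmul : ∀ a b : K, D (a * b) = D a * b + a * D b)
    (c y : K) (i j : ℕ) :
    D (qBell D c (-c) i * (fun z => D z + c * z)^[j] y)
      = qBell D c (-c) (i + 1) * (fun z => D z + c * z)^[j] y
        + qBell D c (-c) i * (fun z => D z + c * z)^[j + 1] y := by
  rw [hmul, qBell_neg_succ, Function.iterate_succ_apply']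
  noncomm_ring

theorem iterate_eq_sum_choose_qBell_mul (hadd : ∀ a b : K, D (a + b) = D a + D b)
    (hmul : ∀ a b : K, D (a * b) = D a * b + a * D b) (c y : K) (m : ℕ) :
    D^[m] y = ∑ j ∈ range (m + 1),
      (m.choose j : K) * qBell D c (-c) j * (fun z => D z + c * z)^[m - j] y := by
  have h := (AddMonoidHom.mk' D hadd).iterate_apply_eq_sum_choose_nsmul
    (fun i j => qBell D c (-c) i * (fun z => D z + c * z)^[j] y)
    (map_qBell_neg_mul_iterate D hmul c y) m
  simp only [qBell, one_mul, Function.iterate_zero_apply, nsmul_eq_mul, ← mul_assoc] at h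
  rw [← Nat.sum_antidiagonal_eq_sum_range_succ
    (fun i j => (m.choose i : K) * qBell D c (-c) i * (fun z => D z + c * z)^[j] y)]
  exact h

end Leibniz

/-- the Miura (oper) expansion with
`I k = ∑_{j≤k} C(k,j) a_{k-j} Q_j(-a₁)`. -/
theorem miura_oper_expansion {K : Type*} [Ring K] (D : K → K)
    (hadd : ∀ a b : K, D (a + b) = D a + D b)
    (hmul : ∀ a b : K, D (a * b) = D a * b + a * D b)
    (n : ℕ) (a : ℕ → K) (ha0 : a 0 = 1)
    (I : ℕ → K)
    (hI : ∀ k, I k = ∑ j ∈ Finset.range (k + 1),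
      (k.choose j : K) * a (k - j) * qBell D (a 1) (-(a 1)) j) :
    I 0 = 1 ∧ I 1 = 0 ∧
      ∀ y : K,
        ∑ i ∈ Finset.range (n + 1), (n.choose i : K) * a i * D^[n - i] y
          = ∑ k ∈ Finset.range (n + 1),
              (n.choose k : K) * I k * (fun z => D z + a 1 * z)^[n - k] y := by
  refine ⟨by simp [hI, qBell, ha0], ?_, fun y ↦ ?_⟩
  · simp [hI, sum_range_succ, qBell, ha0, leibniz_map_one D hmul]
  · simp only [iterate_eq_sum_choose_qBell_mul D hadd hmul (a 1), hI]
    exact sum_choose_mul_sum_choose_mul a _ (fun m ↦ (fun z => D z + a 1 * z)^[m] y) n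
end

section
/- Let A be a complete normed ring that is a normed ℂ-algebra with unit, let N be a nonzero integer, and let a, b, c, d be real numbers with a*d − b*c = 1. Let ℍ := { z ∈ ℂ : 0 < Im z }, and let Φ : ℂ → A be differentiable at every point of ℍ, with Φ(z) invertible in A for every z ∈ ℍ, and satisfying the weight-N modularity Φ((a*z+b)/(c*z+d)) = (c*z+d)^N • Φ(z) for all z ∈ ℍ. Define G(z) := (2/N) • (Φ(z)⁻¹ * deriv Φ z). Then G is a modular connection of eccentricity 1: for all z ∈ ℍ, G((a*z+b)/(c*z+d)) = (c*z+d)^2 • G(z) + (2*c*(c*z+d)) • 1, where 1 is the unit of A. -/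
/-!
Differentiating `Φ (γ z) = (c z + d) ^ N • Φ z` with `γ' z = (c z + d)⁻²` gives
`(c z + d)⁻² • Φ' (γ z) = (c z + d) ^ N • Φ' z + N c (c z + d) ^ (N - 1) • Φ z`.
Multiplying on the left by `Φ (γ z)⁻¹ = (c z + d) ^ (-N) • (Φ z)⁻¹`, the first term becomes
`(c z + d) ^ 2 • (Φ z)⁻¹ * Φ' z`, while the derivative of the automorphy factor leaves the scalar
`N c (c z + d)`; scaling by `2 / N` normalises it to `2 c (c z + d)`.
-/

open Topology

theorem Ring.inverse_smul {𝕜 A : Type*} [Field 𝕜] [Semiring A] [Algebra 𝕜 A] {s : 𝕜}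
    (hs : s ≠ 0) (x : A) : Ring.inverse (s • x) = s⁻¹ • Ring.inverse x := by
  have hsx : IsUnit (s • x) ↔ IsUnit x := isUnit_smul_iff (Units.mk0 s hs) x
  by_cases hx : IsUnit x
  · rw [Ring.inverse_of_isUnit (hsx.mpr hx)]
    refine Units.inv_eq_of_mul_eq_one_right ?_
    rw [IsUnit.unit_spec, smul_mul_smul_comm, mul_inv_cancel₀ hs, Ring.mul_inverse_cancel x hx,
      one_smul]
  · rw [Ring.inverse_non_unit _ hx, Ring.inverse_non_unit _ (mt hsx.mp hx), smul_zero]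

theorem Ring.inverse_smul_mul_add_smul {𝕜 A : Type*} [Field 𝕜] [Semiring A] [Algebra 𝕜 A]
    {s : 𝕜} (hs : s ≠ 0) (t u : 𝕜) {x : A} (hx : IsUnit x) (y : A) :
    Ring.inverse (s • x) * (t • y + u • x) =
      (s⁻¹ * t) • (Ring.inverse x * y) + (s⁻¹ * u) • 1 := by
  rw [Ring.inverse_smul hs, mul_add, smul_mul_smul_comm, smul_mul_smul_comm,
    Ring.inverse_mul_cancel x hx]

theorem Complex.ofReal_mul_add_ofReal_ne_zero {c d : ℝ} {z : ℂ} (hz : z.im ≠ 0)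
    (hcd : c ≠ 0 ∨ d ≠ 0) : (c : ℂ) * z + d ≠ 0 := by
  have hcd' : ![c, d] ≠ 0 := by
    rintro h
    exact hcd.elim (· (congrFun h 0)) (· (congrFun h 1))
  simpa using UpperHalfPlane.linear_ne_zero_of_im hz hcd'

theorem Complex.im_moebius (a b c d : ℝ) (z : ℂ) :
    (((a : ℂ) * z + b) / (c * z + d)).im = (a * d - b * c) * z.im / normSq (c * z + d) := by
  simp only [div_im, add_im, mul_im, ofReal_re, ofReal_im, zero_mul, add_zero, add_re, mul_re,
    sub_zero, ← sub_div]
  ring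

theorem hasDerivAt_moebius {𝕜 : Type*} [NontriviallyNormedField 𝕜] {a b c d z : 𝕜}
    (hz : c * z + d ≠ 0) :
    HasDerivAt (fun x => (a * x + b) / (c * x + d)) ((a * d - b * c) / (c * z + d) ^ 2) z := by
  have hnum : HasDerivAt (fun x => a * x + b) a z := by
    simpa using ((hasDerivAt_id z).const_mul a).add_const b
  have hden : HasDerivAt (fun x => c * x + d) c z := by
    simpa using ((hasDerivAt_id z).const_mul c).add_const d
  have := hnum.div hden hz
  rwa [show a * (c * z + d) - (a * z + b) * c = a * d - b * c by ring] at this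

theorem smul_deriv_eq_of_comp_eventuallyEq_smul {𝕜 E : Type*} [NontriviallyNormedField 𝕜]
    [NormedAddCommGroup E] [NormedSpace 𝕜 E] {Φ : 𝕜 → E} {m j : 𝕜 → 𝕜} {z m' j' : 𝕜}
    {Φ' Φ'ₘ : E} (hm : HasDerivAt m m' z) (hj : HasDerivAt j j' z)
    (hΦₘ : HasDerivAt Φ Φ'ₘ (m z)) (hΦ : HasDerivAt Φ Φ' z)
    (h : (fun x => Φ (m x)) =ᶠ[𝓝 z] fun x => j x • Φ x) :
    m' • Φ'ₘ = j z • Φ' + j' • Φ z :=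
  ((hΦₘ.scomp z hm).congr_of_eventuallyEq h.symm).unique (hj.smul hΦ)

theorem inverse_mul_deriv_moebius {A : Type*} [NormedRing A] [NormedAlgebra ℂ A] (N : ℤ)
    {a b c d : ℝ} (hdet : a * d - b * c = 1) {Φ : ℂ → A}
    (hΦdiff : ∀ z : ℂ, 0 < z.im → DifferentiableAt ℂ Φ z)
    (hΦunit : ∀ z : ℂ, 0 < z.im → IsUnit (Φ z))
    (hΦmod : ∀ z : ℂ, 0 < z.im →
      Φ (((a : ℂ) * z + b) / (c * z + d)) = ((c * z + d) ^ N) • Φ z)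
    {z : ℂ} (hz : 0 < z.im) :
    Ring.inverse (Φ ((a * z + b) / (c * z + d))) * deriv Φ ((a * z + b) / (c * z + d))
      = ((c * z + d) ^ 2) • (Ring.inverse (Φ z) * deriv Φ z) + (N * c * (c * z + d)) • 1 := by
  set q : ℂ := c * z + d
  set w : ℂ := (a * z + b) / q
  have hq : q ≠ 0 := by
    refine Complex.ofReal_mul_add_ofReal_ne_zero hz.ne' ?_
    by_contra! hcd
    simp [hcd] at hdet
  have hw : 0 < w.im := by
    rw [Complex.im_moebius, hdet, one_mul]
    exact div_pos hz (Complex.normSq_pos.mpr hq)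
  have hm : HasDerivAt (fun x : ℂ => (a * x + b) / (c * x + d)) (1 / q ^ 2) z := by
    have hdetC : (a * d - b * c : ℂ) = 1 := mod_cast hdet
    simpa only [hdetC] using hasDerivAt_moebius (a := (a : ℂ)) (b := b) hq
  have hj : HasDerivAt (fun x : ℂ => (c * x + d) ^ N) (N * q ^ (N - 1) * c) z := by
    have hden : HasDerivAt (fun x : ℂ => c * x + d) c z := by
      simpa using ((hasDerivAt_id z).const_mul (c : ℂ)).add_const (d : ℂ)
    exact (hasDerivAt_zpow N q (Or.inl hq)).comp z hden
  have hmod :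
      (fun x => Φ ((a * x + b) / (c * x + d))) =ᶠ[𝓝 z] fun x => (c * x + d) ^ N • Φ x := by
    filter_upwards [(isOpen_lt continuous_const Complex.continuous_im).mem_nhds hz] with x hx
    exact hΦmod x hx
  have hderiv := smul_deriv_eq_of_comp_eventuallyEq_smul hm hj (hΦdiff w hw).hasDerivAt
    (hΦdiff z hz).hasDerivAt hmod
  have hderiv' :
      deriv Φ w = (q ^ 2 * q ^ N) • deriv Φ z + (q ^ 2 * (N * q ^ (N - 1) * c)) • Φ z := by
    rw [mul_smul, mul_smul, ← smul_add, ← hderiv, smul_smul,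
      mul_one_div_cancel (pow_ne_zero 2 hq), one_smul]
  rw [hΦmod z hz, hderiv', Ring.inverse_smul_mul_add_smul (zpow_ne_zero N hq) _ _ (hΦunit z hz),
    zpow_sub₀ hq, zpow_one]
  congr 2 <;> field_simp

theorem maurer_cartan_modular_connection_general
    {A : Type*} [NormedRing A] [NormedAlgebra ℂ A]
    (N : ℤ) (hN : N ≠ 0) (a b c d : ℝ) (hdet : a * d - b * c = 1)
    (Φ : ℂ → A)
    (hΦdiff : ∀ z : ℂ, 0 < z.im → DifferentiableAt ℂ Φ z)
    (hΦunit : ∀ z : ℂ, 0 < z.im → IsUnit (Φ z))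
    (hΦmod : ∀ z : ℂ, 0 < z.im →
      Φ (((a : ℂ) * z + (b : ℂ)) / ((c : ℂ) * z + (d : ℂ)))
        = (((c : ℂ) * z + (d : ℂ)) ^ N) • Φ z)
    (G : ℂ → A)
    (hG : ∀ z : ℂ, G z = ((2 : ℂ) / (N : ℂ)) • (Ring.inverse (Φ z) * deriv Φ z)) :
    ∀ z : ℂ, 0 < z.im →
      G (((a : ℂ) * z + (b : ℂ)) / ((c : ℂ) * z + (d : ℂ)))
        = (((c : ℂ) * z + (d : ℂ)) ^ 2) • G z
            + ((2 : ℂ) * (c : ℂ) * ((c : ℂ) * z + (d : ℂ))) • (1 : A) := by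
  intro z hz
  have hNC : (N : ℂ) ≠ 0 := Int.cast_ne_zero.mpr hN
  rw [hG, hG, inverse_mul_deriv_moebius N hdet hΦdiff hΦunit hΦmod hz, smul_add, smul_smul,
    smul_smul, smul_smul, mul_comm (2 / (N : ℂ))]
  congr 2
  field_simp

/-- the Maurer–Cartan logarithmic derivative
`G = (2/N) • (Φ⁻¹ * Φ')` of an invertible weight-`N` form is a modular
connection of eccentricity 1. -/
theorem maurer_cartan_modular_connection
    {A : Type*} [NormedRing A] [NormedAlgebra ℂ A] [CompleteSpace A]
    (N : ℤ) (hN : N ≠ 0) (a b c d : ℝ) (hdet : a * d - b * c = 1)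
    (Φ : ℂ → A)
    (hΦdiff : ∀ z : ℂ, 0 < z.im → DifferentiableAt ℂ Φ z)
    (hΦunit : ∀ z : ℂ, 0 < z.im → IsUnit (Φ z))
    (hΦmod : ∀ z : ℂ, 0 < z.im →
      Φ (((a : ℂ) * z + (b : ℂ)) / ((c : ℂ) * z + (d : ℂ)))
        = (((c : ℂ) * z + (d : ℂ)) ^ N) • Φ z)
    (G : ℂ → A)
    (hG : ∀ z : ℂ, G z = ((2 : ℂ) / (N : ℂ)) • (Ring.inverse (Φ z) * deriv Φ z)) :
    ∀ z : ℂ, 0 < z.im →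
      G (((a : ℂ) * z + (b : ℂ)) / ((c : ℂ) * z + (d : ℂ)))
        = (((c : ℂ) * z + (d : ℂ)) ^ 2) • G z
            + ((2 : ℂ) * (c : ℂ) * ((c : ℂ) * z + (d : ℂ))) • (1 : A) :=
  maurer_cartan_modular_connection_general N hN a b c d hdet Φ hΦdiff hΦunit hΦmod G hG
end
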